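/- Let φ be a real-valued measurable function on ℝ with |φ(x)| ≤ M⟨x⟩^{−δ} for some M > 0 and δ > 5/2. Then there exist absolute constants C₀, C₁ > 0, independent of φ and M, such that the function λ ↦ F^±(λ²) is C¹ on (0, 1/2) and for every 0 < λ < 1/2 and k ∈ {0, 1}: |d^k/dλ^k F^±(λ²)| ≤ C_k M² λ^{−1−k}; moreover, if in addition ∫_ℝ φ(x) dx = 0, then |d^k/dλ^k F^±(λ²)| ≤ C_k M² for k ∈ {0, 1} and 0 < λ < 1/2. -/

import Mathlib

/-!
Write `F^±(λ²) = (±i / 2λ) G(±λ)` with `G(t) = ∬ e^{it|x-y|} φ(x) φ(y)` (`expAbsPairing`).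
The decay `δ > 5/2` makes `⟨x⟩φ` integrable, so `G` is `C¹` with `|G| ≤ ‖φ‖₁²` and
`|G'| ≤ 2 ‖φ‖₁ ‖xφ‖₁`, which gives the general bounds. If `∫ φ = 0` then `G(0) = (∫ φ)² = 0`,
so `|G(t)| = O(|t|)` by the mean value theorem. The derivative of `F` is governed by
`t G'(t) - G(t) = ∬ g(t|x-y|) φ(x) φ(y)` with `g(s) = (is - 1) e^{is}` (`eulerExp`), which must
be `O(t²)`. As `|g'(s)| = |s|` and `(|x| + |y|)(|x| + |y| - |x-y|) ≤ 4|x||y|`, replacing `|x-y|`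
by `|x| + |y|` costs `O(t² ‖xφ‖₁²)`; the new kernel factorises into `2it P Q - P²` with
`P(t) = ∫ e^{it|x|} φ` (`expAbsIntegral`) and `Q(t) = ∫ |x| e^{it|x|} φ`, and the cancellation
gives `|P(t)| ≤ |t| ‖xφ‖₁`.
-/

open MeasureTheory Set

/-- `F^±(λ²) = ⟨R₀^±(λ²)φ, φ⟩` for the one-dimensional free resolvent, whose kernel is
`(±i/(2λ)) e^{±iλ|x−y|}`; the sign `±` is encoded by `σ ∈ {1, -1}`. -/
noncomputable def resolventFormD1 (σ : ℝ) (φ : ℝ → ℝ) (l : ℝ) : ℂ :=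
  ∫ x : ℝ, ∫ y : ℝ,
    ((σ : ℂ) * Complex.I / (2 * (l : ℂ))) *
      Complex.exp ((σ : ℂ) * Complex.I * (l : ℂ) * ((|x - y| : ℝ) : ℂ)) *
      (φ y : ℂ) * (φ x : ℂ)

open Complex

lemma add_abs_mul_sub_abs_sub_le (x y : ℝ) :
    (|x| + |y|) * (|x| + |y| - |x - y|) ≤ 4 * (|x| * |y|) := by
  rcases le_total 0 x with hx | hx <;> rcases le_total 0 y with hy | hy <;>
    rcases le_total x y with hxy | hxy <;>
    simp only [abs_of_nonneg, abs_of_nonpos, hx, hy, sub_nonneg.2, sub_nonpos.2, hxy] <;>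
    nlinarith

/-- `(t ∂ₜ - 1) e^{ita} = eulerExp (t a)`. -/
noncomputable def eulerExp (s : ℝ) : ℂ := (I * s - 1) * cexp (I * s)

@[fun_prop]
lemma continuous_eulerExp : Continuous eulerExp := by
  unfold eulerExp
  fun_prop

lemma hasDerivAt_eulerExp (s : ℝ) : HasDerivAt eulerExp (-s * cexp (I * s)) s := by
  have h := (((hasDerivAt_id (s : ℂ)).const_mul I).sub_const 1).mul
    ((hasDerivAt_id (s : ℂ)).const_mul I).cexp
  refine h.comp_ofReal.congr_deriv ?_
  simp only [id_eq]
  linear_combination ((s : ℂ) * cexp (I * s)) * I_sq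

lemma norm_eulerExp_sub_le {u v C : ℝ} (hu : |u| ≤ C) (hv : |v| ≤ C) :
    ‖eulerExp u - eulerExp v‖ ≤ C * |u - v| := by
  have hbound : ∀ s ∈ Icc (-C) C, ‖-(s : ℂ) * cexp (I * s)‖ ≤ C := fun s hs => by
    rw [norm_mul, norm_neg, norm_exp_I_mul_ofReal, mul_one, norm_real, Real.norm_eq_abs]
    exact abs_le.2 hs
  simpa [Real.norm_eq_abs] using (convex_Icc (-C) C).norm_image_sub_le_of_norm_hasDerivWithin_le
    (fun s _ => (hasDerivAt_eulerExp s).hasDerivWithinAt) hbound (abs_le.1 hv) (abs_le.1 hu)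

lemma norm_eulerExp_abs_sub_sub_le (t x y : ℝ) :
    ‖eulerExp (t * |x - y|) - eulerExp (t * (|x| + |y|))‖ ≤ 4 * t ^ 2 * (|x| * |y|) := by
  have hab : |x - y| ≤ |x| + |y| := abs_sub x y
  refine (norm_eulerExp_sub_le (C := |t| * (|x| + |y|)) ?_ ?_).trans ?_
  · rw [abs_mul, abs_abs]
    gcongr
  · rw [abs_mul, abs_of_nonneg (by positivity : 0 ≤ |x| + |y|)]
  · rw [← mul_sub, abs_mul, abs_of_nonpos (sub_nonpos.2 hab), ← sq_abs t]
    nlinarith [add_abs_mul_sub_abs_sub_le x y, sq_nonneg |t|, abs_nonneg t]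

section ExpAbsPairing

variable {φ : ℝ → ℂ}

noncomputable def expAbsPairing (φ : ℝ → ℂ) (t : ℝ) : ℂ :=
  ∫ p : ℝ × ℝ, cexp (I * ↑(t * |p.1 - p.2|)) * (φ p.1 * φ p.2)

noncomputable def expAbsPairingDeriv (φ : ℝ → ℂ) (t : ℝ) : ℂ :=
  ∫ p : ℝ × ℝ, I * ↑|p.1 - p.2| * cexp (I * ↑(t * |p.1 - p.2|)) * (φ p.1 * φ p.2)

noncomputable def expAbsIntegral (φ : ℝ → ℂ) (t : ℝ) : ℂ :=
  ∫ x, cexp (I * ↑(t * |x|)) * φ x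

lemma integrable_mul_tensor {k : ℝ × ℝ → ℂ} {g : ℝ × ℝ → ℝ} (hk : Continuous k)
    (hφ : Integrable φ) (hg : Integrable g) (hkg : ∀ p, ‖k p‖ * (‖φ p.1‖ * ‖φ p.2‖) ≤ g p) :
    Integrable (fun p : ℝ × ℝ => k p * (φ p.1 * φ p.2)) :=
  hg.mono' (hk.aestronglyMeasurable.mul (hφ.mul_prod hφ).aestronglyMeasurable)
    (ae_of_all _ fun p => by simpa only [norm_mul] using hkg p)

lemma norm_integral_mul_tensor_le {k : ℝ × ℝ → ℂ} {g : ℝ × ℝ → ℝ} (hg : Integrable g)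
    (hkg : ∀ p, ‖k p‖ * (‖φ p.1‖ * ‖φ p.2‖) ≤ g p) :
    ‖∫ p : ℝ × ℝ, k p * (φ p.1 * φ p.2)‖ ≤ ∫ p, g p :=
  norm_integral_le_of_norm_le hg (ae_of_all _ fun p => by simpa only [norm_mul] using hkg p)

lemma abs_sub_mul_norm_mul_norm_le (x y : ℝ) :
    |x - y| * (‖φ x‖ * ‖φ y‖) ≤ ‖x • φ x‖ * ‖φ y‖ + ‖φ x‖ * ‖y • φ y‖ := by
  simp only [norm_smul, Real.norm_eq_abs]
  nlinarith [abs_sub x y, mul_nonneg (norm_nonneg (φ x)) (norm_nonneg (φ y))]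

lemma integrable_moment_tensor (hφ : Integrable φ) (hxφ : Integrable fun x : ℝ => x • φ x) :
    Integrable (fun p : ℝ × ℝ => ‖p.1 • φ p.1‖ * ‖φ p.2‖ + ‖φ p.1‖ * ‖p.2 • φ p.2‖) :=
  (hxφ.norm.mul_prod hφ.norm).add (hφ.norm.mul_prod hxφ.norm)

lemma integral_moment_tensor (hφ : Integrable φ) (hxφ : Integrable fun x : ℝ => x • φ x) :
    ∫ p : ℝ × ℝ, (‖p.1 • φ p.1‖ * ‖φ p.2‖ + ‖φ p.1‖ * ‖p.2 • φ p.2‖)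
      = 2 * ((∫ x, ‖φ x‖) * ∫ x, ‖x • φ x‖) := by
  rw [Measure.volume_eq_prod, integral_add (hxφ.norm.mul_prod hφ.norm)
    (hφ.norm.mul_prod hxφ.norm), integral_prod_mul (fun x => ‖x • φ x‖) (fun x => ‖φ x‖),
    integral_prod_mul (fun x => ‖φ x‖) (fun x => ‖x • φ x‖)]
  ring

lemma integrable_expAbsKernel (hφ : Integrable φ) (t : ℝ) :
    Integrable (fun p : ℝ × ℝ => cexp (I * ↑(t * |p.1 - p.2|)) * (φ p.1 * φ p.2)) :=
  integrable_mul_tensor (by fun_prop) hφ (hφ.norm.mul_prod hφ.norm) fun p => by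
    rw [norm_exp_I_mul_ofReal, one_mul]

lemma norm_expAbsPairing_le (hφ : Integrable φ) (t : ℝ) :
    ‖expAbsPairing φ t‖ ≤ (∫ x, ‖φ x‖) ^ 2 := by
  refine (norm_integral_mul_tensor_le (hφ.norm.mul_prod hφ.norm) fun p => ?_).trans_eq ?_
  · rw [norm_exp_I_mul_ofReal, one_mul]
  · rw [Measure.volume_eq_prod, integral_prod_mul (fun x => ‖φ x‖) (fun x => ‖φ x‖), sq]

lemma norm_expAbsDerivKernel_le (t : ℝ) (p : ℝ × ℝ) :
    ‖I * ↑|p.1 - p.2| * cexp (I * ↑(t * |p.1 - p.2|))‖ * (‖φ p.1‖ * ‖φ p.2‖)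
      ≤ ‖p.1 • φ p.1‖ * ‖φ p.2‖ + ‖φ p.1‖ * ‖p.2 • φ p.2‖ := by
  rw [norm_mul, norm_mul, norm_I, norm_exp_I_mul_ofReal, norm_real, Real.norm_eq_abs, abs_abs,
    one_mul, mul_one]
  exact abs_sub_mul_norm_mul_norm_le p.1 p.2

lemma integrable_expAbsDerivKernel (hφ : Integrable φ) (hxφ : Integrable fun x : ℝ => x • φ x)
    (t : ℝ) : Integrable (fun p : ℝ × ℝ =>
      I * ↑|p.1 - p.2| * cexp (I * ↑(t * |p.1 - p.2|)) * (φ p.1 * φ p.2)) :=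
  integrable_mul_tensor (by fun_prop) hφ (integrable_moment_tensor hφ hxφ)
    (norm_expAbsDerivKernel_le t)

lemma hasDerivAt_cexp_I_mul_mul (a : ℝ) (c : ℂ) (s : ℝ) :
    HasDerivAt (fun s : ℝ => cexp (I * ↑(s * a)) * c) (I * a * cexp (I * ↑(s * a)) * c) s := by
  have h := ((((hasDerivAt_id (s : ℂ)).mul_const (a : ℂ)).const_mul I).cexp.mul_const c).comp_ofReal
  convert h using 1
  · ext s
    push_cast [id]
    ring
  · push_cast [id]
    ring

lemma hasDerivAt_expAbsPairing (hφ : Integrable φ) (hxφ : Integrable fun x : ℝ => x • φ x)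
    (t : ℝ) : HasDerivAt (expAbsPairing φ) (expAbsPairingDeriv φ t) t :=
  (hasDerivAt_integral_of_dominated_loc_of_deriv_le Filter.univ_mem
    (Filter.Eventually.of_forall fun s => (integrable_expAbsKernel hφ s).aestronglyMeasurable)
    (integrable_expAbsKernel hφ t) (integrable_expAbsDerivKernel hφ hxφ t).aestronglyMeasurable
    (ae_of_all _ fun p s _ => by
      simpa only [norm_mul] using norm_expAbsDerivKernel_le (φ := φ) s p)
    (integrable_moment_tensor hφ hxφ)
    (ae_of_all _ fun p s _ => hasDerivAt_cexp_I_mul_mul _ _ s)).2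

lemma norm_expAbsPairingDeriv_le (hφ : Integrable φ) (hxφ : Integrable fun x : ℝ => x • φ x)
    (t : ℝ) : ‖expAbsPairingDeriv φ t‖ ≤ 2 * ((∫ x, ‖φ x‖) * ∫ x, ‖x • φ x‖) :=
  (norm_integral_mul_tensor_le (integrable_moment_tensor hφ hxφ)
    (norm_expAbsDerivKernel_le t)).trans_eq (integral_moment_tensor hφ hxφ)

lemma continuous_expAbsPairingDeriv (hφ : Integrable φ) (hxφ : Integrable fun x : ℝ => x • φ x) :
    Continuous (expAbsPairingDeriv φ) :=
  continuous_of_dominated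
    (fun t => (integrable_expAbsDerivKernel hφ hxφ t).aestronglyMeasurable)
    (fun t => ae_of_all _ fun p => by simpa only [norm_mul] using norm_expAbsDerivKernel_le t p)
    (integrable_moment_tensor hφ hxφ) (ae_of_all _ fun p => by fun_prop)

lemma contDiff_expAbsPairing (hφ : Integrable φ) (hxφ : Integrable fun x : ℝ => x • φ x) :
    ContDiff ℝ 1 (expAbsPairing φ) := by
  rw [contDiff_one_iff_deriv]
  refine ⟨fun t => (hasDerivAt_expAbsPairing hφ hxφ t).differentiableAt, ?_⟩
  rw [show deriv (expAbsPairing φ) = expAbsPairingDeriv φ from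
    funext fun t => (hasDerivAt_expAbsPairing hφ hxφ t).deriv]
  exact continuous_expAbsPairingDeriv hφ hxφ

lemma expAbsPairing_zero : expAbsPairing φ 0 = (∫ x, φ x) ^ 2 := by
  simp only [expAbsPairing, zero_mul, ofReal_zero, mul_zero, exp_zero, one_mul]
  rw [Measure.volume_eq_prod, integral_prod_mul φ φ, sq]

lemma norm_expAbsPairing_le_of_integral_eq_zero (hφ : Integrable φ)
    (hxφ : Integrable fun x : ℝ => x • φ x) (h0 : ∫ x, φ x = 0) (t : ℝ) :
    ‖expAbsPairing φ t‖ ≤ 2 * ((∫ x, ‖φ x‖) * ∫ x, ‖x • φ x‖) * |t| := by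
  have h := convex_univ.norm_image_sub_le_of_norm_hasDerivWithin_le
    (fun s _ => (hasDerivAt_expAbsPairing hφ hxφ s).hasDerivWithinAt)
    (fun s _ => norm_expAbsPairingDeriv_le hφ hxφ s) (mem_univ 0) (mem_univ t)
  rwa [expAbsPairing_zero, h0, sq, zero_mul, sub_zero, Real.norm_eq_abs, sub_zero] at h

lemma integrable_expAbs_mul (hφ : Integrable φ) (t : ℝ) :
    Integrable (fun x => cexp (I * ↑(t * |x|)) * φ x) :=
  hφ.bdd_mul (by fun_prop : Continuous _).aestronglyMeasurable
    (ae_of_all _ fun x => (norm_exp_I_mul_ofReal _).le)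

lemma norm_expAbsIntegral_le (hφ : Integrable φ) (t : ℝ) :
    ‖expAbsIntegral φ t‖ ≤ ∫ x, ‖φ x‖ :=
  norm_integral_le_of_norm_le hφ.norm
    (ae_of_all _ fun x => by rw [norm_mul, norm_exp_I_mul_ofReal, one_mul])

lemma norm_expAbsIntegral_le_of_integral_eq_zero (hφ : Integrable φ)
    (hxφ : Integrable fun x : ℝ => x • φ x) (h0 : ∫ x, φ x = 0) (t : ℝ) :
    ‖expAbsIntegral φ t‖ ≤ |t| * ∫ x, ‖x • φ x‖ := by
  have hsub : expAbsIntegral φ t = ∫ x, (cexp (I * ↑(t * |x|)) - 1) * φ x := by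
    simp only [sub_mul, one_mul]
    rw [integral_sub (integrable_expAbs_mul hφ t) hφ, h0, sub_zero, expAbsIntegral]
  rw [hsub, ← integral_const_mul]
  refine norm_integral_le_of_norm_le (hxφ.norm.const_mul _) (ae_of_all _ fun x => ?_)
  rw [norm_mul, norm_smul, Real.norm_eq_abs, ← mul_assoc, ← abs_abs x, ← abs_mul]
  gcongr
  simpa only [Real.norm_eq_abs, abs_abs] using Real.norm_exp_I_mul_ofReal_sub_one_le (x := t * |x|)

lemma norm_ofReal_abs_mul (x : ℝ) : ‖((|x| : ℝ) : ℂ) * φ x‖ = ‖x • φ x‖ := by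
  rw [norm_mul, norm_smul, norm_real, Real.norm_eq_abs, abs_abs, Real.norm_eq_abs]

lemma integrable_ofReal_abs_mul (hφ : Integrable φ) (hxφ : Integrable fun x : ℝ => x • φ x) :
    Integrable fun x : ℝ => ((|x| : ℝ) : ℂ) * φ x :=
  hxφ.norm.mono' ((continuous_ofReal.comp continuous_abs).aestronglyMeasurable.mul hφ.1)
    (ae_of_all _ fun x => (norm_ofReal_abs_mul x).le)

lemma integral_eulerExp_add_abs_kernel (hφ : Integrable φ) (hxφ : Integrable fun x : ℝ => x • φ x)
    (t : ℝ) :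
    ∫ p : ℝ × ℝ, eulerExp (t * (|p.1| + |p.2|)) * (φ p.1 * φ p.2)
      = 2 * I * t * (expAbsIntegral φ t * expAbsIntegral (fun x => ↑|x| * φ x) t)
        - expAbsIntegral φ t ^ 2 := by
  set e : ℝ → ℂ := fun x => cexp (I * ↑(t * |x|)) * φ x
  set f : ℝ → ℂ := fun x => cexp (I * ↑(t * |x|)) * (↑|x| * φ x)
  have he : Integrable e := integrable_expAbs_mul hφ t
  have hf : Integrable f := integrable_expAbs_mul (integrable_ofReal_abs_mul hφ hxφ) t
  have hsplit : ∀ p : ℝ × ℝ,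
      eulerExp (t * (|p.1| + |p.2|)) * (φ p.1 * φ p.2)
        = I * t * (f p.1 * e p.2) + I * t * (e p.1 * f p.2) - e p.1 * e p.2 := fun p => by
    simp only [eulerExp, e, f, mul_add, ofReal_add, ofReal_mul, exp_add]
    ring
  simp_rw [hsplit]
  have hfe := (hf.mul_prod he).const_mul (I * t)
  have hef := (he.mul_prod hf).const_mul (I * t)
  rw [Measure.volume_eq_prod, integral_sub, integral_add hfe hef, integral_const_mul,
    integral_const_mul, integral_prod_mul f e, integral_prod_mul e f, integral_prod_mul e e]
  · simp only [expAbsIntegral, e, f]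
    ring
  exacts [hfe.add hef, he.mul_prod he]

lemma norm_eulerExp_kernel_sub_le (t : ℝ) (p : ℝ × ℝ) :
    ‖eulerExp (t * |p.1 - p.2|) - eulerExp (t * (|p.1| + |p.2|))‖ * (‖φ p.1‖ * ‖φ p.2‖)
      ≤ 4 * t ^ 2 * (‖p.1 • φ p.1‖ * ‖p.2 • φ p.2‖) := by
  simp only [norm_smul, Real.norm_eq_abs]
  calc _ ≤ 4 * t ^ 2 * (|p.1| * |p.2|) * (‖φ p.1‖ * ‖φ p.2‖) := by
        gcongr
        exact norm_eulerExp_abs_sub_sub_le t p.1 p.2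
    _ = _ := by ring

lemma norm_integral_eulerExp_kernel_sub_le (hxφ : Integrable fun x : ℝ => x • φ x) (t : ℝ) :
    ‖∫ p : ℝ × ℝ,
      (eulerExp (t * |p.1 - p.2|) - eulerExp (t * (|p.1| + |p.2|))) * (φ p.1 * φ p.2)‖
        ≤ 4 * t ^ 2 * (∫ x, ‖x • φ x‖) ^ 2 := by
  refine (norm_integral_mul_tensor_le ((hxφ.norm.mul_prod hxφ.norm).const_mul (4 * t ^ 2))
    (norm_eulerExp_kernel_sub_le t)).trans_eq ?_
  rw [integral_const_mul, Measure.volume_eq_prod,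
    integral_prod_mul (fun x => ‖x • φ x‖) (fun x => ‖x • φ x‖), sq (∫ x, ‖x • φ x‖)]

lemma mul_expAbsPairingDeriv_sub_eq (hφ : Integrable φ) (hxφ : Integrable fun x : ℝ => x • φ x)
    (t : ℝ) :
    t * expAbsPairingDeriv φ t - expAbsPairing φ t
      = (∫ p : ℝ × ℝ,
          (eulerExp (t * |p.1 - p.2|) - eulerExp (t * (|p.1| + |p.2|))) * (φ p.1 * φ p.2))
        + (2 * I * t * (expAbsIntegral φ t * expAbsIntegral (fun x => ↑|x| * φ x) t)
          - expAbsIntegral φ t ^ 2) := by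
  have hK := integrable_expAbsDerivKernel hφ hxφ t
  have hD := integrable_mul_tensor (by fun_prop) hφ
    ((hxφ.norm.mul_prod hxφ.norm).const_mul (4 * t ^ 2)) (norm_eulerExp_kernel_sub_le t)
  rw [expAbsPairingDeriv, expAbsPairing, ← integral_const_mul,
    ← integral_sub (hK.const_mul (t : ℂ)) (integrable_expAbsKernel hφ t),
    ← integral_eulerExp_add_abs_kernel hφ hxφ t, ← integral_add hD]
  · congr 1
    ext p
    simp only [eulerExp]
    push_cast
    ring
  · refine (((hK.const_mul (t : ℂ)).sub (integrable_expAbsKernel hφ t)).sub hD).congr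
      (ae_of_all _ fun p => ?_)
    simp only [Pi.sub_apply, eulerExp]
    push_cast
    ring

lemma norm_mul_expAbsPairingDeriv_sub_le_of_integral_eq_zero (hφ : Integrable φ)
    (hxφ : Integrable fun x : ℝ => x • φ x) (h0 : ∫ x, φ x = 0) (t : ℝ) :
    ‖t * expAbsPairingDeriv φ t - expAbsPairing φ t‖ ≤ 7 * t ^ 2 * (∫ x, ‖x • φ x‖) ^ 2 := by
  have hP := norm_expAbsIntegral_le_of_integral_eq_zero hφ hxφ h0 t
  have hQ : ‖expAbsIntegral (fun x => ↑|x| * φ x) t‖ ≤ ∫ x, ‖x • φ x‖ :=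
    (norm_expAbsIntegral_le (integrable_ofReal_abs_mul hφ hxφ) t).trans_eq
      (integral_congr_ae (ae_of_all _ norm_ofReal_abs_mul))
  rw [mul_expAbsPairingDeriv_sub_eq hφ hxφ t]
  refine (norm_add_le _ _).trans
    ((add_le_add (norm_integral_eulerExp_kernel_sub_le hxφ t) (norm_sub_le _ _)).trans ?_)
  rw [norm_mul, norm_mul, norm_mul, norm_mul, norm_I, norm_real, Real.norm_eq_abs, norm_pow,
    norm_ofNat, mul_one]
  calc 4 * t ^ 2 * (∫ x, ‖x • φ x‖) ^ 2 + (2 * |t| * (‖expAbsIntegral φ t‖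
        * ‖expAbsIntegral (fun x => ↑|x| * φ x) t‖) + ‖expAbsIntegral φ t‖ ^ 2)
      ≤ 4 * t ^ 2 * (∫ x, ‖x • φ x‖) ^ 2 + (2 * |t| * ((|t| * ∫ x, ‖x • φ x‖)
        * ∫ x, ‖x • φ x‖) + (|t| * ∫ x, ‖x • φ x‖) ^ 2) := by gcongr
    _ = 7 * t ^ 2 * (∫ x, ‖x • φ x‖) ^ 2 := by
        rw [← sq_abs t]
        ring

end ExpAbsPairing

noncomputable def japaneseBracketIntegral (r : ℝ) : ℝ := ∫ x : ℝ, √(1 + x ^ 2) ^ (-r)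

lemma integrable_sqrt_one_add_sq_rpow_neg {r : ℝ} (hr : 1 < r) :
    Integrable fun x : ℝ => √(1 + x ^ 2) ^ (-r) := by
  refine (integrable_rpow_neg_one_add_norm_sq (E := ℝ) (μ := volume) (r := r)
    (by simpa using hr)).congr (ae_of_all _ fun x => ?_)
  dsimp only
  rw [Real.norm_eq_abs, sq_abs, Real.sqrt_eq_rpow, ← Real.rpow_mul (by positivity)]
  ring_nf

lemma japaneseBracketIntegral_pos {r : ℝ} (hr : 1 < r) : 0 < japaneseBracketIntegral r :=
  integral_pos_of_integrable_nonneg_nonzero (x := 0)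
    ((by fun_prop : Continuous fun x : ℝ => √(1 + x ^ 2)).rpow_const fun x => .inl (by positivity))
    (integrable_sqrt_one_add_sq_rpow_neg hr) (fun x => by positivity) (by positivity)

lemma one_le_sqrt_one_add_sq (x : ℝ) : 1 ≤ √(1 + x ^ 2) :=
  Real.one_le_sqrt.2 (by nlinarith)

lemma sqrt_one_add_sq_rpow_neg_le {a b : ℝ} (hab : a ≤ b) (x : ℝ) :
    √(1 + x ^ 2) ^ (-b) ≤ √(1 + x ^ 2) ^ (-a) :=
  Real.rpow_le_rpow_of_exponent_le (one_le_sqrt_one_add_sq x) (neg_le_neg hab)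

lemma abs_mul_sqrt_one_add_sq_rpow_neg_le {a b : ℝ} (hab : a + 1 ≤ b) (x : ℝ) :
    |x| * √(1 + x ^ 2) ^ (-b) ≤ √(1 + x ^ 2) ^ (-a) := by
  have hpos : 0 < √(1 + x ^ 2) := by positivity
  calc |x| * √(1 + x ^ 2) ^ (-b) ≤ √(1 + x ^ 2) * √(1 + x ^ 2) ^ (-b) := by
        gcongr
        exact Real.abs_le_sqrt (by linarith)
    _ = √(1 + x ^ 2) ^ (-(b - 1)) := by
        rw [show -(b - 1) = 1 + -b by ring, Real.rpow_add hpos, Real.rpow_one]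
    _ ≤ √(1 + x ^ 2) ^ (-a) := sqrt_one_add_sq_rpow_neg_le (by linarith) x

lemma integrable_and_integral_norm_le {f : ℝ → ℂ} {g : ℝ → ℝ} (hf : AEStronglyMeasurable f)
    (hg : Integrable g) (hfg : ∀ x, ‖f x‖ ≤ g x) :
    Integrable f ∧ ∫ x, ‖f x‖ ≤ ∫ x, g x :=
  ⟨hg.mono' hf (ae_of_all _ hfg), integral_mono (hg.mono' hf (ae_of_all _ hfg)).norm hg hfg⟩

section Decay

variable {φ : ℝ → ℝ} {M δ r : ℝ}

lemma integrable_ofReal_of_decay (hφm : Measurable φ) (hM : 0 ≤ M) (hr : 1 < r) (hrδ : r ≤ δ)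
    (hφ : ∀ x, |φ x| ≤ M * √(1 + x ^ 2) ^ (-δ)) :
    (Integrable fun x => (φ x : ℂ)) ∧ ∫ x, ‖(φ x : ℂ)‖ ≤ M * japaneseBracketIntegral r := by
  refine (integrable_and_integral_norm_le (f := fun x => (φ x : ℂ))
    (measurable_ofReal.comp hφm).aestronglyMeasurable
    ((integrable_sqrt_one_add_sq_rpow_neg hr).const_mul M) fun x => ?_).imp_right
    (·.trans_eq (integral_const_mul M _))
  rw [norm_real, Real.norm_eq_abs]
  exact (hφ x).trans (mul_le_mul_of_nonneg_left (sqrt_one_add_sq_rpow_neg_le hrδ x) hM)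

lemma integrable_smul_ofReal_of_decay (hφm : Measurable φ) (hM : 0 ≤ M) (hr : 1 < r)
    (hrδ : r + 1 ≤ δ) (hφ : ∀ x, |φ x| ≤ M * √(1 + x ^ 2) ^ (-δ)) :
    (Integrable fun x : ℝ => x • (φ x : ℂ))
      ∧ ∫ x, ‖x • (φ x : ℂ)‖ ≤ M * japaneseBracketIntegral r := by
  refine (integrable_and_integral_norm_le (f := fun x : ℝ => x • (φ x : ℂ))
    (measurable_id.smul (measurable_ofReal.comp hφm)).aestronglyMeasurable
    ((integrable_sqrt_one_add_sq_rpow_neg hr).const_mul M) fun x => ?_).imp_right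
    (·.trans_eq (integral_const_mul M _))
  rw [norm_smul, norm_real, Real.norm_eq_abs, Real.norm_eq_abs]
  calc |x| * |φ x| ≤ |x| * (M * √(1 + x ^ 2) ^ (-δ)) := by gcongr; exact hφ x
    _ = M * (|x| * √(1 + x ^ 2) ^ (-δ)) := by ring
    _ ≤ M * √(1 + x ^ 2) ^ (-r) :=
        mul_le_mul_of_nonneg_left (abs_mul_sqrt_one_add_sq_rpow_neg_le hrδ x) hM

end Decay

section ResolventForm

variable {φ : ℝ → ℝ} {σ K l : ℝ}

lemma resolventFormD1_eq_expAbsPairing (hφ : Integrable fun x => (φ x : ℂ)) :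
    resolventFormD1 σ φ l = σ * I / (2 * l) * expAbsPairing (fun x => φ x) (σ * l) := by
  rw [expAbsPairing, ← integral_const_mul, Measure.volume_eq_prod,
    integral_prod _ ((integrable_expAbsKernel hφ (σ * l)).const_mul _), resolventFormD1]
  congr 1
  ext x
  congr 1
  ext y
  push_cast
  ring_nf

lemma resolventFormD1_eq_fun (hφ : Integrable fun x => (φ x : ℂ)) :
    resolventFormD1 σ φ
      = fun l : ℝ => σ * I / 2 * ((l : ℂ)⁻¹ * expAbsPairing (fun x => φ x) (σ * l)) := by
  ext l
  rw [resolventFormD1_eq_expAbsPairing hφ]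
  ring

lemma hasDerivAt_resolventFormD1 (hφ : Integrable fun x => (φ x : ℂ))
    (hxφ : Integrable fun x : ℝ => x • (φ x : ℂ)) (hl : l ≠ 0) :
    HasDerivAt (resolventFormD1 σ φ) (σ * I / (2 * l ^ 2) * ((σ * l : ℝ)
      * expAbsPairingDeriv (fun x => φ x) (σ * l) - expAbsPairing (fun x => φ x) (σ * l))) l := by
  have hlc : (l : ℂ) ≠ 0 := ofReal_ne_zero.2 hl
  have hG := (hasDerivAt_expAbsPairing hφ hxφ (σ * l)).scomp l ((hasDerivAt_id l).const_mul σ)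
  rw [resolventFormD1_eq_fun hφ]
  refine ((((hasDerivAt_inv hlc).comp_ofReal).mul hG).const_mul (σ * I / 2)).congr_deriv ?_
  simp only [Function.comp_apply, mul_one, real_smul]
  field_simp
  push_cast
  ring

lemma contDiffAt_resolventFormD1 (hφ : Integrable fun x => (φ x : ℂ))
    (hxφ : Integrable fun x : ℝ => x • (φ x : ℂ)) (hl : l ≠ 0) :
    ContDiffAt ℝ 1 (resolventFormD1 σ φ) l := by
  rw [resolventFormD1_eq_fun hφ]
  exact contDiffAt_const.mul (((contDiffAt_inv ℝ (ofReal_ne_zero.2 hl)).comp l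
    ofRealCLM.contDiff.contDiffAt).mul
    ((contDiff_expAbsPairing hφ hxφ).comp (contDiff_const.mul contDiff_id)).contDiffAt)

lemma norm_resolventFormD1 (hφ : Integrable fun x => (φ x : ℂ)) (hσ : |σ| = 1) (hl : 0 < l) :
    ‖resolventFormD1 σ φ l‖ = ‖expAbsPairing (fun x => φ x) (σ * l)‖ / (2 * l) := by
  rw [resolventFormD1_eq_expAbsPairing hφ, norm_mul, norm_div, norm_mul, norm_mul, norm_I,
    norm_real, norm_real, Real.norm_eq_abs, Real.norm_eq_abs, hσ, abs_of_pos hl, norm_ofNat]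
  ring

lemma norm_deriv_resolventFormD1 (hφ : Integrable fun x => (φ x : ℂ))
    (hxφ : Integrable fun x : ℝ => x • (φ x : ℂ)) (hσ : |σ| = 1) (hl : 0 < l) :
    ‖deriv (resolventFormD1 σ φ) l‖ = ‖(σ * l : ℝ) * expAbsPairingDeriv (fun x => φ x) (σ * l)
      - expAbsPairing (fun x => φ x) (σ * l)‖ / (2 * l ^ 2) := by
  rw [(hasDerivAt_resolventFormD1 hφ hxφ hl.ne').deriv, norm_mul, norm_div, norm_mul,
    norm_mul, norm_I, norm_real, Real.norm_eq_abs, hσ, norm_pow, norm_real, Real.norm_eq_abs,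
    abs_of_pos hl, norm_ofNat]
  ring

lemma norm_resolventFormD1_le (hφ : Integrable fun x => (φ x : ℂ)) (hσ : |σ| = 1)
    (hA : ∫ x, ‖(φ x : ℂ)‖ ≤ K) (hl : 0 < l) : ‖resolventFormD1 σ φ l‖ ≤ K ^ 2 / (2 * l) := by
  rw [norm_resolventFormD1 hφ hσ hl]
  gcongr
  exact (norm_expAbsPairing_le hφ _).trans
    (pow_le_pow_left₀ (integral_nonneg fun _ => norm_nonneg _) hA 2)

lemma norm_deriv_resolventFormD1_le (hφ : Integrable fun x => (φ x : ℂ))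
    (hxφ : Integrable fun x : ℝ => x • (φ x : ℂ)) (hσ : |σ| = 1)
    (hA : ∫ x, ‖(φ x : ℂ)‖ ≤ K) (hB : ∫ x, ‖x • (φ x : ℂ)‖ ≤ K) (hl : 0 < l) (hl2 : l ≤ 1 / 2) :
    ‖deriv (resolventFormD1 σ φ) l‖ ≤ K ^ 2 / l ^ 2 := by
  have hA0 : 0 ≤ ∫ x, ‖(φ x : ℂ)‖ := integral_nonneg fun _ => norm_nonneg _
  have hB0 : 0 ≤ ∫ x, ‖x • (φ x : ℂ)‖ := integral_nonneg fun _ => norm_nonneg _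
  have hN : ‖(σ * l : ℝ) * expAbsPairingDeriv (fun x => φ x) (σ * l)
      - expAbsPairing (fun x => φ x) (σ * l)‖ ≤ 2 * K ^ 2 := by
    refine (norm_sub_le _ _).trans ?_
    rw [norm_mul, norm_real, Real.norm_eq_abs, abs_mul, hσ, one_mul, abs_of_pos hl]
    have hG := norm_expAbsPairing_le hφ (σ * l)
    have hG' := mul_le_mul_of_nonneg_left (norm_expAbsPairingDeriv_le hφ hxφ (σ * l)) hl.le
    nlinarith [mul_le_mul hA hB hB0 (hA0.trans hA)]
  rw [norm_deriv_resolventFormD1 hφ hxφ hσ hl, div_le_div_iff₀ (by positivity) (by positivity)]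
  nlinarith [sq_nonneg l]

lemma norm_resolventFormD1_le_of_integral_eq_zero (hφ : Integrable fun x => (φ x : ℂ))
    (hxφ : Integrable fun x : ℝ => x • (φ x : ℂ)) (h0 : ∫ x, (φ x : ℂ) = 0) (hσ : |σ| = 1)
    (hA : ∫ x, ‖(φ x : ℂ)‖ ≤ K) (hB : ∫ x, ‖x • (φ x : ℂ)‖ ≤ K) (hl : 0 < l) :
    ‖resolventFormD1 σ φ l‖ ≤ K ^ 2 := by
  have hA0 : 0 ≤ ∫ x, ‖(φ x : ℂ)‖ := integral_nonneg fun _ => norm_nonneg _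
  have hB0 : 0 ≤ ∫ x, ‖x • (φ x : ℂ)‖ := integral_nonneg fun _ => norm_nonneg _
  rw [norm_resolventFormD1 hφ hσ hl, div_le_iff₀ (by positivity)]
  refine (norm_expAbsPairing_le_of_integral_eq_zero hφ hxφ h0 _).trans ?_
  rw [abs_mul, hσ, one_mul, abs_of_pos hl]
  have := mul_le_mul hA hB hB0 (hA0.trans hA)
  nlinarith

lemma norm_deriv_resolventFormD1_le_of_integral_eq_zero (hφ : Integrable fun x => (φ x : ℂ))
    (hxφ : Integrable fun x : ℝ => x • (φ x : ℂ)) (h0 : ∫ x, (φ x : ℂ) = 0) (hσ : |σ| = 1)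
    (hB : ∫ x, ‖x • (φ x : ℂ)‖ ≤ K) (hl : 0 < l) :
    ‖deriv (resolventFormD1 σ φ) l‖ ≤ 7 / 2 * K ^ 2 := by
  have hB0 : 0 ≤ ∫ x, ‖x • (φ x : ℂ)‖ := integral_nonneg fun _ => norm_nonneg _
  rw [norm_deriv_resolventFormD1 hφ hxφ hσ hl, div_le_iff₀ (by positivity)]
  refine (norm_mul_expAbsPairingDeriv_sub_le_of_integral_eq_zero hφ hxφ h0 _).trans ?_
  rw [mul_pow, ← sq_abs σ, hσ, one_pow, one_mul]
  have := pow_le_pow_left₀ hB0 hB 2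
  nlinarith [sq_nonneg l]

end ResolventForm

/-- Estimate (2.25) of the paper (Lemma 2.3, case `d = 1`): low-energy derivative bounds
for `F^±`, with an improvement when `∫ φ = 0`. -/
theorem low_energy_F_bounds_d1 :
    ∃ C₀ > 0, ∃ C₁ > 0, ∀ σ : ℝ, (σ = 1 ∨ σ = -1) →
      ∀ (φ : ℝ → ℝ) (M δ : ℝ), Measurable φ → 0 < M → 5/2 < δ →
        (∀ x : ℝ, |φ x| ≤ M * Real.sqrt (1 + x ^ 2) ^ (-δ)) →
        ContDiffOn ℝ 1 (resolventFormD1 σ φ) (Ioo 0 (1/2)) ∧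
        (∀ l ∈ Ioo (0:ℝ) (1/2),
          ‖resolventFormD1 σ φ l‖ ≤ C₀ * M ^ 2 * l ^ (-(1:ℝ)) ∧
          ‖deriv (resolventFormD1 σ φ) l‖ ≤ C₁ * M ^ 2 * l ^ (-(2:ℝ))) ∧
        ((∫ x : ℝ, φ x) = 0 →
          ∀ l ∈ Ioo (0:ℝ) (1/2),
            ‖resolventFormD1 σ φ l‖ ≤ C₀ * M ^ 2 ∧
            ‖deriv (resolventFormD1 σ φ) l‖ ≤ C₁ * M ^ 2) := by
  set c := japaneseBracketIntegral (3 / 2)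
  have hc : 0 < c := japaneseBracketIntegral_pos (by norm_num)
  refine ⟨c ^ 2, by positivity, 7 / 2 * c ^ 2, by positivity, fun σ hσ φ M δ hφm hM hδ hφ => ?_⟩
  have hσ1 : |σ| = 1 := by rcases hσ with rfl | rfl <;> simp
  obtain ⟨hψ, hA⟩ := integrable_ofReal_of_decay hφm hM.le (r := 3 / 2) (by norm_num)
    (by linarith) hφ
  obtain ⟨hxψ, hB⟩ := integrable_smul_ofReal_of_decay hφm hM.le (r := 3 / 2) (by norm_num)
    (by linarith) hφ
  have hψ0 : (∫ x, φ x) = 0 → ∫ x, (φ x : ℂ) = 0 := fun h0 => by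
    rw [integral_complex_ofReal, h0, ofReal_zero]
  refine ⟨fun l hl => (contDiffAt_resolventFormD1 hψ hxψ hl.1.ne').contDiffWithinAt,
    fun l hl => ⟨?_, ?_⟩, fun h0 l hl => ⟨?_, ?_⟩⟩
  · calc _ ≤ (M * c) ^ 2 / (2 * l) := norm_resolventFormD1_le hψ hσ1 hA hl.1
      _ ≤ (M * c) ^ 2 / l := div_le_div_of_nonneg_left (by positivity) hl.1 (by linarith [hl.1])
      _ = c ^ 2 * M ^ 2 * l ^ (-(1 : ℝ)) := by rw [Real.rpow_neg_one]; ring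
  · refine (norm_deriv_resolventFormD1_le hψ hxψ hσ1 hA hB hl.1 hl.2.le).trans ?_
    rw [Real.rpow_neg hl.1.le, Real.rpow_two, div_eq_mul_inv]
    gcongr
    nlinarith [mul_nonneg (sq_nonneg c) (sq_nonneg M)]
  · exact (norm_resolventFormD1_le_of_integral_eq_zero hψ hxψ (hψ0 h0) hσ1 hA hB hl.1).trans_eq
      (by ring)
  · exact (norm_deriv_resolventFormD1_le_of_integral_eq_zero hψ hxψ (hψ0 h0) hσ1 hB hl.1).trans_eq
      (by ring)
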